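/- Let W be a uniformly recurrent non-eventually-periodic infinite word whose recurrence function satisfies P₂(k) ≤ C·k. Then there exists C₅ > 0 such that for any factor u of W, any two distinct occurrences of u in W have left endpoints at distance at least C₅·|u|. -/

import Mathlib

/-!
If a factor `u` occurs at positions `a < a + d`, then `W` has period `d` on the window
`[a, a + |u| + d)`. Were `|u| ≥ C (d + 1)`, linear recurrence would put every factor of length
`d + 1` inside this window, and reading each such factor off the window shows `W (x + d) = W x`
for all `x`, contradicting aperiodicity. Hence `|u| < C (d + 1) ≤ (2C + 1) d`.
-/

/-- The factor (subword) of the infinite word `W` of length `n` starting at position `i`. -/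
def factorAt {A : Type*} (W : ℕ → A) (i n : ℕ) : List A :=
  (List.range n).map (fun j => W (i + j))

/-- `u` is a finite factor of the infinite word `W`. -/
def IsFactorOf {A : Type*} (u : List A) (W : ℕ → A) : Prop :=
  ∃ i, u = factorAt W i u.length

section InfiniteWord

variable {A : Type*} (W : ℕ → A)

@[simp]
lemma length_factorAt (i n : ℕ) : (factorAt W i n).length = n := by
  simp [factorAt]

@[simp]
lemma getElem_factorAt {i n p : ℕ} (h : p < (factorAt W i n).length) :
    (factorAt W i n)[p] = W (i + p) := by
  simp [factorAt]

lemma isFactorOf_factorAt (i n : ℕ) : IsFactorOf (factorAt W i n) W :=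
  ⟨i, by rw [length_factorAt]⟩

lemma factorAt_eq_factorAt_iff {i j n : ℕ} :
    factorAt W i n = factorAt W j n ↔ ∀ t < n, W (i + t) = W (j + t) := by
  simp [factorAt]

lemma exists_eq_factorAt_of_infix {v : List A} {i m : ℕ} (h : v <:+: factorAt W i m) :
    ∃ s, s + v.length ≤ m ∧ v = factorAt W (i + s) v.length := by
  obtain ⟨s, hs, hget⟩ := List.infix_iff_getElem?.mp h
  rw [length_factorAt] at hs
  refine ⟨s, by omega, List.ext_getElem (by simp) fun p hp _ => ?_⟩
  have := hget p hp
  rw [List.getElem?_eq_getElem (by simp; omega), getElem_factorAt, Option.some_inj] at this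
  simp [← this, Nat.add_assoc, Nat.add_comm p]

lemma periodic_of_forall_infix_factorAt {a d m : ℕ}
    (hwin : ∀ x, factorAt W x (d + 1) <:+: factorAt W a m)
    (hper : ∀ t, t + d < m → W (a + t + d) = W (a + t)) : Function.Periodic W d := by
  intro x
  obtain ⟨s, hs, hv⟩ := exists_eq_factorAt_of_infix W (hwin x)
  rw [length_factorAt] at hs hv
  have hx := (factorAt_eq_factorAt_iff W).mp hv
  calc W (x + d) = W (a + s + d) := hx d (by omega)
    _ = W (a + s) := hper s (by omega)
    _ = W x := (hx 0 (by omega)).symm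

variable {C : ℕ}

lemma length_lt_of_factorAt_eq
    (hrec : ∀ k ≥ 1, ∀ u v : List A, IsFactorOf u W → u.length = C * k →
      IsFactorOf v W → v.length = k → v <:+: u)
    (hnp : ¬ ∃ N k : ℕ, 0 < k ∧ ∀ i ≥ N, W (i + k) = W i)
    {a d n : ℕ} (hd : 0 < d) (h : factorAt W a n = factorAt W (a + d) n) :
    n < C * (d + 1) := by
  by_contra! hn
  have hloc := (factorAt_eq_factorAt_iff W).mp h
  have hwin (x : ℕ) : factorAt W x (d + 1) <:+: factorAt W a (C * (d + 1)) :=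
    hrec (d + 1) (by omega) _ _ (isFactorOf_factorAt W _ _) (length_factorAt W _ _)
      (isFactorOf_factorAt W _ _) (length_factorAt W _ _)
  have hper (t : ℕ) (ht : t + d < C * (d + 1)) : W (a + t + d) = W (a + t) := by
    rw [hloc t (by omega), Nat.add_right_comm]
  exact hnp ⟨0, d, hd, fun i _ => periodic_of_forall_infix_factorAt W hwin hper i⟩

lemma length_le_mul_sub_of_factorAt_eq
    (hrec : ∀ k ≥ 1, ∀ u v : List A, IsFactorOf u W → u.length = C * k →
      IsFactorOf v W → v.length = k → v <:+: u)
    (hnp : ¬ ∃ N k : ℕ, 0 < k ∧ ∀ i ≥ N, W (i + k) = W i)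
    {a b n : ℕ} (hab : a < b) (h : factorAt W a n = factorAt W b n) :
    n ≤ (2 * C + 1) * (b - a) := by
  have := length_lt_of_factorAt_eq W hrec hnp (d := b - a) (by omega)
    (by rwa [Nat.add_sub_cancel' hab.le])
  have hd : 1 ≤ b - a := by omega
  nlinarith

end InfiniteWord

/-- In a uniformly recurrent, non-eventually-periodic word with linear recurrence,
two distinct occurrences of a factor u are at distance at least C₅·|u|. -/
theorem stmt6 {A : Type*} (W : ℕ → A) (C : ℕ)
    (hrec : ∀ k ≥ 1, ∀ u v : List A, IsFactorOf u W → u.length = C * k →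
      IsFactorOf v W → v.length = k → v <:+: u)
    (hnp : ¬ ∃ N k : ℕ, 0 < k ∧ ∀ i ≥ N, W (i + k) = W i) :
    ∃ C₅ : ℝ, 0 < C₅ ∧ ∀ (u : List A) (i j : ℕ),
      factorAt W i u.length = u → factorAt W j u.length = u → i ≠ j →
      C₅ * u.length ≤ |(i : ℝ) - (j : ℝ)| := by
  refine ⟨1 / (2 * C + 1), by positivity, fun u i j hi hj hij => ?_⟩
  wlog hlt : i < j generalizing i j
  · rw [abs_sub_comm]
    exact this j i hj hi hij.symm (by omega)
  have hle : (u.length : ℝ) ≤ (2 * C + 1) * ((j : ℝ) - i) := by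
    have := length_le_mul_sub_of_factorAt_eq W hrec hnp hlt (hi.trans hj.symm)
    rw [← Nat.cast_le (α := ℝ)] at this
    push_cast [hlt.le] at this
    exact this
  rw [abs_sub_comm, abs_of_pos (by simpa using hlt), one_div_mul_eq_div, div_le_iff₀ (by positivity)]
  linarith
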